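/- arXiv:1611.03770 — 5 statements merged into one kernel-verified Lean document; each statement's English description precedes it below -/
import Mathlib

section
/- Assume X and Y are C¹. Let p = (0, c) ∈ Σ₁ with X₁(p)·Y₁(p) < 0 and det Z(p) = 0. Then the function s ↦ Z₁ˢ(0, s) is differentiable at s = c and its derivative equals ∂(det Z)/∂x₂ (p) / (X₁(p) − Y₁(p)). In particular, the pseudo-equilibrium p of Z₁ˢ is hyperbolic (i.e. (Z₁ˢ)'(p) ≠ 0) if and only if ∂(det Z)/∂x₂ (p) ≠ 0. -/
/-- derivative of the sliding vector field `Z₁ˢ` along `Σ₁` at a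
pseudo-equilibrium `p = (0,c)` equals `∂₂(det Z)(p) / (X₁(p) − Y₁(p))`; in
particular, the pseudo-equilibrium is hyperbolic iff `∂₂(det Z)(p) ≠ 0`. -/
theorem sliding_deriv_on_sigma1 (X Y : ℝ × ℝ → ℝ × ℝ)
    (hX : ContDiff ℝ 1 X) (hY : ContDiff ℝ 1 Y) (c : ℝ)
    (hse : (X (0, c)).1 * (Y (0, c)).1 < 0)
    (hdet : (X (0, c)).1 * (Y (0, c)).2 - (X (0, c)).2 * (Y (0, c)).1 = 0) :
    HasDerivAt (fun s : ℝ =>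
        ((Y (0, s)).1 * (X (0, s)).2 - (X (0, s)).1 * (Y (0, s)).2) /
          ((Y (0, s)).1 - (X (0, s)).1))
      ((deriv (fun s : ℝ =>
          (X (0, s)).1 * (Y (0, s)).2 - (X (0, s)).2 * (Y (0, s)).1) c) /
        ((X (0, c)).1 - (Y (0, c)).1)) c ∧
    (deriv (fun s : ℝ =>
        ((Y (0, s)).1 * (X (0, s)).2 - (X (0, s)).1 * (Y (0, s)).2) /
          ((Y (0, s)).1 - (X (0, s)).1)) c ≠ 0 ↔
      deriv (fun s : ℝ =>
        (X (0, s)).1 * (Y (0, s)).2 - (X (0, s)).2 * (Y (0, s)).1) c ≠ 0) := by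
  have hcurve : Differentiable ℝ (fun s : ℝ => ((0 : ℝ), s)) :=
    (differentiable_const _).prodMk differentiable_id
  have hX1 : DifferentiableAt ℝ (fun s : ℝ => (X (0, s)).1) c :=
    (((hX.differentiable one_ne_zero).comp hcurve).fst ) c
  have hX2 : DifferentiableAt ℝ (fun s : ℝ => (X (0, s)).2) c :=
    (((hX.differentiable one_ne_zero).comp hcurve).snd ) c
  have hY1 : DifferentiableAt ℝ (fun s : ℝ => (Y (0, s)).1) c :=
    (((hY.differentiable one_ne_zero).comp hcurve).fst ) c
  have hY2 : DifferentiableAt ℝ (fun s : ℝ => (Y (0, s)).2) c :=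
    (((hY.differentiable one_ne_zero).comp hcurve).snd ) c
  have hDdiff : DifferentiableAt ℝ (fun s : ℝ =>
      (X (0, s)).1 * (Y (0, s)).2 - (X (0, s)).2 * (Y (0, s)).1) c :=
    (hX1.mul hY2).sub (hX2.mul hY1)
  set d := deriv (fun s : ℝ =>
      (X (0, s)).1 * (Y (0, s)).2 - (X (0, s)).2 * (Y (0, s)).1) c with hd
  have hdetD : HasDerivAt (fun s : ℝ =>
      (X (0, s)).1 * (Y (0, s)).2 - (X (0, s)).2 * (Y (0, s)).1) d c :=
    hDdiff.hasDerivAt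
  -- numerator is the negation of det
  have hnum : HasDerivAt (fun s : ℝ =>
      (Y (0, s)).1 * (X (0, s)).2 - (X (0, s)).1 * (Y (0, s)).2) (-d) c := by
    have : HasDerivAt (fun s : ℝ =>
        -((X (0, s)).1 * (Y (0, s)).2 - (X (0, s)).2 * (Y (0, s)).1)) (-d) c := hdetD.neg
    convert this using 2 with s
    ring
  have hden : DifferentiableAt ℝ (fun s : ℝ => (Y (0, s)).1 - (X (0, s)).1) c :=
    hY1.sub hX1
  have hden0 : (Y (0, c)).1 - (X (0, c)).1 ≠ 0 := by
    intro h
    have : (Y (0, c)).1 = (X (0, c)).1 := by linarith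
    rw [this] at hse
    nlinarith [sq_nonneg (X (0, c)).1]
  have hq : HasDerivAt (fun s : ℝ =>
      ((Y (0, s)).1 * (X (0, s)).2 - (X (0, s)).1 * (Y (0, s)).2) /
        ((Y (0, s)).1 - (X (0, s)).1))
      ((-d * ((Y (0, c)).1 - (X (0, c)).1) -
        ((Y (0, c)).1 * (X (0, c)).2 - (X (0, c)).1 * (Y (0, c)).2) *
          deriv (fun s : ℝ => (Y (0, s)).1 - (X (0, s)).1) c) /
        ((Y (0, c)).1 - (X (0, c)).1) ^ 2) c :=
    hnum.div hden.hasDerivAt hden0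
  have hnum0 : (Y (0, c)).1 * (X (0, c)).2 - (X (0, c)).1 * (Y (0, c)).2 = 0 := by
    linarith
  have hval : (-d * ((Y (0, c)).1 - (X (0, c)).1) -
        ((Y (0, c)).1 * (X (0, c)).2 - (X (0, c)).1 * (Y (0, c)).2) *
          deriv (fun s : ℝ => (Y (0, s)).1 - (X (0, s)).1) c) /
        ((Y (0, c)).1 - (X (0, c)).1) ^ 2 =
      d / ((X (0, c)).1 - (Y (0, c)).1) := by
    have hXY0 : (X (0, c)).1 - (Y (0, c)).1 ≠ 0 := fun h => hden0 (by linarith)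
    rw [hnum0, zero_mul, sub_zero, div_eq_div_iff (pow_ne_zero 2 hden0) hXY0]
    ring
  rw [hval] at hq
  refine ⟨hq, ?_⟩
  rw [hq.deriv]
  constructor
  · intro h hd0
    apply h
    rw [hd0, zero_div]
  · intro h
    exact div_ne_zero h (by intro h'; apply hden0; linarith)
end

section
/- Assume X and Y are C¹. Let p = (c, 0) ∈ Σ₂ with X₂(p)·Y₂(p) < 0 and det Z(p) = 0. Then the function s ↦ Z₂ˢ(s, 0) is differentiable at s = c and its derivative equals − ∂(det Z)/∂x₁ (p) / (X₂(p) − Y₂(p)). In particular, the pseudo-equilibrium p of Z₂ˢ is hyperbolic (i.e. (Z₂ˢ)'(p) ≠ 0) if and only if ∂(det Z)/∂x₁ (p) ≠ 0. -/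
/-- derivative of the sliding vector field `Z₂ˢ` along `Σ₂` at a
pseudo-equilibrium `p = (c,0)` equals `−∂₁(det Z)(p) / (X₂(p) − Y₂(p))`; in
particular, the pseudo-equilibrium is hyperbolic iff `∂₁(det Z)(p) ≠ 0`. -/
theorem sliding_deriv_on_sigma2 (X Y : ℝ × ℝ → ℝ × ℝ)
    (hX : ContDiff ℝ 1 X) (hY : ContDiff ℝ 1 Y) (c : ℝ)
    (hse : (X (c, 0)).2 * (Y (c, 0)).2 < 0)
    (hdet : (X (c, 0)).1 * (Y (c, 0)).2 - (X (c, 0)).2 * (Y (c, 0)).1 = 0) :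
    HasDerivAt (fun s : ℝ =>
        ((Y (s, 0)).2 * (X (s, 0)).1 - (X (s, 0)).2 * (Y (s, 0)).1) /
          ((Y (s, 0)).2 - (X (s, 0)).2))
      (-(deriv (fun s : ℝ =>
          (X (s, 0)).1 * (Y (s, 0)).2 - (X (s, 0)).2 * (Y (s, 0)).1) c) /
        ((X (c, 0)).2 - (Y (c, 0)).2)) c ∧
    (deriv (fun s : ℝ =>
        ((Y (s, 0)).2 * (X (s, 0)).1 - (X (s, 0)).2 * (Y (s, 0)).1) /
          ((Y (s, 0)).2 - (X (s, 0)).2)) c ≠ 0 ↔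
      deriv (fun s : ℝ =>
        (X (s, 0)).1 * (Y (s, 0)).2 - (X (s, 0)).2 * (Y (s, 0)).1) c ≠ 0) := by
  have hline : Differentiable ℝ (fun s : ℝ => ((s, (0:ℝ)) : ℝ × ℝ)) :=
    differentiable_id.prodMk (differentiable_const 0)
  have hXc : DifferentiableAt ℝ (fun s : ℝ => X (s, 0)) c :=
    ((hX.differentiable one_ne_zero) (c, 0)).comp c (hline c)
  have hYc : DifferentiableAt ℝ (fun s : ℝ => Y (s, 0)) c :=
    ((hY.differentiable one_ne_zero) (c, 0)).comp c (hline c)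
  have hX1 : DifferentiableAt ℝ (fun s : ℝ => (X (s, 0)).1) c := hXc.fst
  have hX2 : DifferentiableAt ℝ (fun s : ℝ => (X (s, 0)).2) c := hXc.snd
  have hY1 : DifferentiableAt ℝ (fun s : ℝ => (Y (s, 0)).1) c := hYc.fst
  have hY2 : DifferentiableAt ℝ (fun s : ℝ => (Y (s, 0)).2) c := hYc.snd
  have hN : DifferentiableAt ℝ
      (fun s : ℝ => (Y (s, 0)).2 * (X (s, 0)).1 - (X (s, 0)).2 * (Y (s, 0)).1) c :=
    (hY2.mul hX1).sub (hX2.mul hY1)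
  have hM : DifferentiableAt ℝ
      (fun s : ℝ => (X (s, 0)).1 * (Y (s, 0)).2 - (X (s, 0)).2 * (Y (s, 0)).1) c :=
    (hX1.mul hY2).sub (hX2.mul hY1)
  have hD : DifferentiableAt ℝ (fun s : ℝ => (Y (s, 0)).2 - (X (s, 0)).2) c :=
    hY2.sub hX2
  have hDne : (Y (c, 0)).2 - (X (c, 0)).2 ≠ 0 := by
    intro h
    have : (Y (c, 0)).2 = (X (c, 0)).2 := by linarith [sub_eq_zero.mp h]
    rw [this] at hse
    nlinarith [sq_nonneg (X (c, 0)).2]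
  have hDne' : (X (c, 0)).2 - (Y (c, 0)).2 ≠ 0 := fun h => hDne (by linarith [sub_eq_zero.mp h])
  -- N and M agree (same function up to mul_comm), so deriv N c = deriv M c
  have hNM : (fun s : ℝ => (Y (s, 0)).2 * (X (s, 0)).1 - (X (s, 0)).2 * (Y (s, 0)).1)
      = (fun s : ℝ => (X (s, 0)).1 * (Y (s, 0)).2 - (X (s, 0)).2 * (Y (s, 0)).1) := by
    funext s; ring
  have hNc0 : (Y (c, 0)).2 * (X (c, 0)).1 - (X (c, 0)).2 * (Y (c, 0)).1 = 0 := by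
    linarith
  have hq := (hN.hasDerivAt.div hD.hasDerivAt hDne)
  have hval : (deriv (fun s : ℝ =>
        (Y (s, 0)).2 * (X (s, 0)).1 - (X (s, 0)).2 * (Y (s, 0)).1) c *
        ((Y (c, 0)).2 - (X (c, 0)).2) -
        ((Y (c, 0)).2 * (X (c, 0)).1 - (X (c, 0)).2 * (Y (c, 0)).1) *
        deriv (fun s : ℝ => (Y (s, 0)).2 - (X (s, 0)).2) c) /
        ((Y (c, 0)).2 - (X (c, 0)).2) ^ 2
      = -(deriv (fun s : ℝ =>
          (X (s, 0)).1 * (Y (s, 0)).2 - (X (s, 0)).2 * (Y (s, 0)).1) c) /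
        ((X (c, 0)).2 - (Y (c, 0)).2) := by
    rw [hNc0, hNM]
    field_simp
    ring
  have hmain : HasDerivAt (fun s : ℝ =>
        ((Y (s, 0)).2 * (X (s, 0)).1 - (X (s, 0)).2 * (Y (s, 0)).1) /
          ((Y (s, 0)).2 - (X (s, 0)).2))
      (-(deriv (fun s : ℝ =>
          (X (s, 0)).1 * (Y (s, 0)).2 - (X (s, 0)).2 * (Y (s, 0)).1) c) /
        ((X (c, 0)).2 - (Y (c, 0)).2)) c := hval ▸ hq
  refine ⟨hmain, ?_⟩
  rw [hmain.deriv, div_ne_zero_iff, neg_ne_zero]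
  exact ⟨fun h => h.1, fun h => ⟨h, hDne'⟩⟩
end

section
/- Suppose both sliding vector fields are defined at the origin, i.e. X₁(0,0)·Y₁(0,0) < 0 and X₂(0,0)·Y₂(0,0) < 0, and suppose det Z(0,0) ≠ 0. Then Z₁ˢ(0,0)·Z₂ˢ(0,0) > 0 if X₁(0,0)·X₂(0,0) < 0, and Z₁ˢ(0,0)·Z₂ˢ(0,0) < 0 if X₁(0,0)·X₂(0,0) > 0. That is, the two sliding vector fields point in the same direction at the origin exactly when X₁ and X₂ have opposite signs at the origin. -/
/-- when both sliding vector fields are defined at the origin and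
`det Z(0,0) ≠ 0`, they point in the same direction iff `X₁(0,0)·X₂(0,0) < 0`. -/
theorem sliding_directions (X Y : ℝ × ℝ → ℝ × ℝ)
    (h1 : (X (0, 0)).1 * (Y (0, 0)).1 < 0)
    (h2 : (X (0, 0)).2 * (Y (0, 0)).2 < 0)
    (hdet : (X (0, 0)).1 * (Y (0, 0)).2 - (X (0, 0)).2 * (Y (0, 0)).1 ≠ 0) :
    ((X (0, 0)).1 * (X (0, 0)).2 < 0 →
      0 < (((Y (0, 0)).1 * (X (0, 0)).2 - (X (0, 0)).1 * (Y (0, 0)).2) /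
            ((Y (0, 0)).1 - (X (0, 0)).1)) *
          (((Y (0, 0)).2 * (X (0, 0)).1 - (X (0, 0)).2 * (Y (0, 0)).1) /
            ((Y (0, 0)).2 - (X (0, 0)).2))) ∧
    (0 < (X (0, 0)).1 * (X (0, 0)).2 →
      (((Y (0, 0)).1 * (X (0, 0)).2 - (X (0, 0)).1 * (Y (0, 0)).2) /
            ((Y (0, 0)).1 - (X (0, 0)).1)) *
          (((Y (0, 0)).2 * (X (0, 0)).1 - (X (0, 0)).2 * (Y (0, 0)).1) /
            ((Y (0, 0)).2 - (X (0, 0)).2)) < 0) := by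
  set a := (X (0, 0)).1 with ha
  set b := (X (0, 0)).2 with hb
  set c := (Y (0, 0)).1 with hc
  set d := (Y (0, 0)).2 with hd
  have hca : c - a ≠ 0 := by
    intro h
    have hce : c = a := by linarith
    rw [hce] at h1
    nlinarith [sq_nonneg a]
  have hdb : d - b ≠ 0 := by
    intro h
    have hde : d = b := by linarith
    rw [hde] at h2
    nlinarith [sq_nonneg b]
  have key : (c * b - a * d) / (c - a) * ((d * a - b * c) / (d - b))
      = -((a * d - b * c) ^ 2) / ((c - a) * (d - b)) := by
    field_simp
    ring
  have hnum : -((a * d - b * c) ^ 2) < 0 := by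
    have : 0 < (a * d - b * c) ^ 2 := by positivity
    linarith
  constructor
  · intro hab
    rw [key]
    have hden : (c - a) * (d - b) < 0 := by
      rcases mul_neg_iff.mp h1 with ⟨hpa, hnc⟩ | ⟨hna, hpc⟩ <;>
        rcases mul_neg_iff.mp h2 with ⟨hpb, hnd⟩ | ⟨hnb, hpd⟩ <;>
        nlinarith
    exact div_pos_of_neg_of_neg hnum hden
  · intro hab
    rw [key]
    have hden : 0 < (c - a) * (d - b) := by
      rcases mul_neg_iff.mp h1 with ⟨hpa, hnc⟩ | ⟨hna, hpc⟩ <;>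
        rcases mul_neg_iff.mp h2 with ⟨hpb, hnd⟩ <;>
        nlinarith
    exact div_neg_of_neg_of_pos hnum hden
end

section
/- Let Y : ℝ² → ℝ² be a continuous vector field and φ : ℝ × ℝ² → ℝ² a C¹ map satisfying φ(0, p) = p for all p and ∂φ/∂t (t, p) = Y(φ(t, p)), with Y₁(0,0) ≠ 0. Suppose τ : ℝ → ℝ is differentiable at 0 with τ(0) = 0, and the first component of φ(τ(x), (x, 0)) equals 0 for all x in a neighborhood of 0. Define the transition map ψ_Y(x) = second component of φ(τ(x), (x, 0)) (mapping Σ₂ into Σ₁ along the flow). Then τ'(0) = −1/Y₁(0,0) and ψ_Y is differentiable at 0 with ψ_Y'(0) = −Y₂(0,0)/Y₁(0,0); equivalently, ψ_Y(x) = −(Y₂(0,0)/Y₁(0,0))·x + O(x²). -/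
/-- the hitting time `τ` from `Σ₂` to `Σ₁` along the flow of `Y`
satisfies `τ'(0) = −1/Y₁(0,0)` and the transition map
`ψ_Y(x) = (φ(τ(x),(x,0)))₂` has derivative `−Y₂(0,0)/Y₁(0,0)` at `0`. -/
theorem transition_map_deriv (Y : ℝ × ℝ → ℝ × ℝ) (φ : ℝ × (ℝ × ℝ) → ℝ × ℝ)
    (hY : Continuous Y) (hφ : ContDiff ℝ 1 φ)
    (hinit : ∀ p : ℝ × ℝ, φ (0, p) = p)
    (hode : ∀ (t : ℝ) (p : ℝ × ℝ), HasDerivAt (fun s => φ (s, p)) (Y (φ (t, p))) t)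
    (hY1 : (Y (0, 0)).1 ≠ 0)
    (τ : ℝ → ℝ) (hτd : DifferentiableAt ℝ τ 0) (hτ0 : τ 0 = 0)
    (hhit : ∀ᶠ x in nhds (0 : ℝ), (φ (τ x, (x, 0))).1 = 0) :
    deriv τ 0 = -1 / (Y (0, 0)).1 ∧
    HasDerivAt (fun x : ℝ => (φ (τ x, (x, 0))).2)
      (-(Y (0, 0)).2 / (Y (0, 0)).1) 0 := by
  set a := deriv τ 0 with ha
  set D := fderiv ℝ φ (0, ((0 : ℝ), (0 : ℝ))) with hDdef
  have hDφ : HasFDerivAt φ D (0, ((0 : ℝ), (0 : ℝ))) :=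
    (hφ.differentiable one_ne_zero (0, ((0 : ℝ), (0 : ℝ)))).hasFDerivAt
  -- D (1, (0,0)) = Y (0,0)
  have hD1 : D (1, ((0 : ℝ), (0 : ℝ))) = Y (0, 0) := by
    have hg : HasDerivAt (fun s : ℝ => (s, ((0 : ℝ), (0 : ℝ))))
        ((1 : ℝ), ((0 : ℝ), (0 : ℝ))) 0 :=
      (hasDerivAt_id 0).prodMk (hasDerivAt_const 0 ((0 : ℝ), (0 : ℝ)))
    have h1 : HasDerivAt (fun s : ℝ => φ (s, ((0 : ℝ), (0 : ℝ))))
        (D (1, ((0 : ℝ), (0 : ℝ)))) 0 := hDφ.comp_hasDerivAt 0 hg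
    have h2 := hode 0 ((0 : ℝ), (0 : ℝ))
    rw [hinit] at h2
    exact h1.unique h2
  -- D (0, v) = v
  have hD2 : ∀ v : ℝ × ℝ, D ((0 : ℝ), v) = v := by
    intro v
    have hg : HasFDerivAt (fun p : ℝ × ℝ => ((0 : ℝ), p))
        ((0 : (ℝ × ℝ) →L[ℝ] ℝ).prod (ContinuousLinearMap.id ℝ (ℝ × ℝ)))
        ((0 : ℝ), (0 : ℝ)) :=
      (hasFDerivAt_const (0 : ℝ) _).prodMk (hasFDerivAt_id _)
    have h1 : HasFDerivAt (fun p : ℝ × ℝ => φ ((0 : ℝ), p))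
        (D.comp ((0 : (ℝ × ℝ) →L[ℝ] ℝ).prod (ContinuousLinearMap.id ℝ (ℝ × ℝ))))
        ((0 : ℝ), (0 : ℝ)) := hDφ.comp _ hg
    have h2 : HasFDerivAt (fun p : ℝ × ℝ => φ ((0 : ℝ), p))
        (ContinuousLinearMap.id ℝ (ℝ × ℝ)) ((0 : ℝ), (0 : ℝ)) := by
      simp only [hinit]; exact hasFDerivAt_id ((0 : ℝ), (0 : ℝ))
    have := h1.unique h2
    have := congrArg (fun (L : (ℝ × ℝ) →L[ℝ] (ℝ × ℝ)) => L v) this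
    simpa using this
  -- F has derivative D (a, (1,0)) at 0
  have hg : HasDerivAt (fun x : ℝ => (τ x, (x, (0 : ℝ)))) (a, ((1 : ℝ), (0 : ℝ))) 0 :=
    hτd.hasDerivAt.prodMk ((hasDerivAt_id 0).prodMk (hasDerivAt_const 0 (0 : ℝ)))
  have hF : HasDerivAt (fun x : ℝ => φ (τ x, (x, (0 : ℝ)))) (D (a, ((1 : ℝ), (0 : ℝ)))) 0 := by
    rw [show ((0 : ℝ), ((0 : ℝ), (0 : ℝ))) = (τ 0, ((0 : ℝ), (0 : ℝ))) by rw [hτ0]] at hDφ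
    exact hDφ.comp_hasDerivAt 0 hg
  -- compute D (a, (1,0))
  have hdec : (a, ((1 : ℝ), (0 : ℝ)))
      = a • ((1 : ℝ), ((0 : ℝ), (0 : ℝ))) + ((0 : ℝ), ((1 : ℝ), (0 : ℝ))) := by
    simp [Prod.ext_iff]
  have hval : D (a, ((1 : ℝ), (0 : ℝ))) = a • Y (0, 0) + ((1 : ℝ), (0 : ℝ)) := by
    rw [hdec, map_add, map_smul, hD1, hD2]
  rw [hval] at hF
  -- first component
  have hF1 : HasDerivAt (fun x : ℝ => (φ (τ x, (x, (0 : ℝ)))).1)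
      (a * (Y (0, 0)).1 + 1) 0 := by
    simpa [Prod.smul_def, smul_eq_mul, Function.comp_def] using hasFDerivAt_fst.comp_hasDerivAt 0 hF
  have hzero : HasDerivAt (fun x : ℝ => (φ (τ x, (x, (0 : ℝ)))).1) 0 0 :=
    (hasDerivAt_const 0 (0 : ℝ)).congr_of_eventuallyEq hhit
  have hkey : a * (Y (0, 0)).1 + 1 = 0 := hF1.unique hzero
  have haval : a = -1 / (Y (0, 0)).1 := by
    rw [eq_div_iff hY1]
    linarith
  constructor
  · exact haval
  · have hF2 : HasDerivAt (fun x : ℝ => (φ (τ x, (x, (0 : ℝ)))).2)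
        (a * (Y (0, 0)).2 + 0) 0 := by
      simpa [Prod.smul_def, smul_eq_mul, Function.comp_def] using hasFDerivAt_snd.comp_hasDerivAt 0 hF
    have : a * (Y (0, 0)).2 + 0 = -(Y (0, 0)).2 / (Y (0, 0)).1 := by
      rw [haval]
      field_simp
      ring
    rwa [this] at hF2
end

section
/- Let X, Y : ℝ² → ℝ² be continuous vector fields with X₂(0,0) ≠ 0 and Y₁(0,0) ≠ 0, and let φ_X, φ_Y be C¹ local flows of X and Y respectively (φ(0,p) = p and ∂ₜφ(t,p) equals the vector field at φ(t,p)). Suppose τ_Y, τ_X : ℝ → ℝ are differentiable at 0 with τ_Y(0) = τ_X(0) = 0, the first component of φ_Y(τ_Y(x), (x,0)) is 0 for all x near 0, and the second component of φ_X(τ_X(y), (0,y)) is 0 for all y near 0. Define the transition maps ψ_Y(x) = second component of φ_Y(τ_Y(x), (x,0)) and ψ_X(y) = first component of φ_X(τ_X(y), (0,y)), and the first return map φ_Z = (ψ_X ∘ ψ_Y) ∘ (ψ_X ∘ ψ_Y). Then φ_Z(0) = 0, φ_Z is differentiable at 0, and φ_Z'(0) = α_Z² where α_Z = (X₁(0,0)·Y₂(0,0))/(X₂(0,0)·Y₁(0,0));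 that is, φ_Z(x) = α_Z² x + O(x²). -/
lemma transition_deriv (φ : ℝ × (ℝ × ℝ) → ℝ × ℝ) (V : ℝ × ℝ → ℝ × ℝ)
    (hφ : ContDiff ℝ 1 φ) (hinit : ∀ p : ℝ × ℝ, φ (0, p) = p)
    (hode : ∀ (t : ℝ) (p : ℝ × ℝ), HasDerivAt (fun s => φ (s, p)) (V (φ (t, p))) t)
    (τ : ℝ → ℝ) (hτd : DifferentiableAt ℝ τ 0) (hτ0 : τ 0 = 0) (v : ℝ × ℝ) :
    HasDerivAt (fun x => φ (τ x, x • v)) (deriv τ 0 • V (0, 0) + v) 0 := by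
  have hD : HasFDerivAt φ (fderiv ℝ φ (0, (0,0))) (0, (0,0)) :=
    (hφ.differentiable one_ne_zero (0, (0,0))).hasFDerivAt
  set D := fderiv ℝ φ (0, (0,0)) with hDdef
  -- time partial
  have h1 : D (1, (0,0)) = V (0, 0) := by
    have hg : HasDerivAt (fun s : ℝ => (s, ((0:ℝ), (0:ℝ)))) (1, ((0:ℝ),(0:ℝ))) 0 :=
      HasDerivAt.prodMk (hasDerivAt_id (0:ℝ)) (hasDerivAt_const 0 _)
    have hc : HasDerivAt (fun s => φ (s, (0,0))) (D (1, (0,0))) 0 :=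
      hD.comp_hasDerivAt 0 hg
    have := hode 0 (0,0)
    rw [hinit (0,0)] at this
    exact hc.unique this
  -- space partial
  have h2 : ∀ w : ℝ × ℝ, D (0, w) = w := by
    have hg : HasFDerivAt (fun p : ℝ × ℝ => ((0:ℝ), p))
        (ContinuousLinearMap.inr ℝ ℝ (ℝ × ℝ)) (0,0) :=
      (ContinuousLinearMap.inr ℝ ℝ (ℝ × ℝ)).hasFDerivAt
    have hc : HasFDerivAt (fun p : ℝ × ℝ => φ (0, p))
        (D.comp (ContinuousLinearMap.inr ℝ ℝ (ℝ × ℝ))) (0,0) := hD.comp (0,0) hg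
    have hid : HasFDerivAt (fun p : ℝ × ℝ => φ (0, p))
        (ContinuousLinearMap.id ℝ (ℝ × ℝ)) (0,0) := by
      have : (fun p : ℝ × ℝ => φ (0, p)) = id := funext hinit
      rw [this]; exact hasFDerivAt_id _
    intro w
    have := hc.unique hid
    calc D (0, w) = (D.comp (ContinuousLinearMap.inr ℝ ℝ (ℝ × ℝ))) w := rfl
    _ = w := by rw [this]; rfl
  have hg : HasDerivAt (fun x : ℝ => (τ x, x • v)) (deriv τ 0, v) 0 := by
    have h3 : HasDerivAt (fun x : ℝ => x • v) ((1:ℝ) • v) 0 :=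
      (hasDerivAt_id 0).smul_const v
    rw [one_smul] at h3
    exact HasDerivAt.prodMk (hτd.hasDerivAt) h3
  have hg' : HasDerivAt (fun x : ℝ => (τ x, x • v)) (deriv τ 0, v) 0 := hg
  have hc : HasDerivAt (fun x => φ (τ x, x • v)) (D (deriv τ 0, v)) 0 := by
    have hD' := hD
    have hpt : ((0:ℝ), ((0:ℝ),(0:ℝ))) = (τ 0, (0:ℝ) • v) := by simp [hτ0]
    rw [hpt] at hD'
    exact hD'.comp_hasDerivAt 0 hg'
  have : D (deriv τ 0, v) = deriv τ 0 • V (0,0) + v := by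
    have : (deriv τ 0, v) = deriv τ 0 • ((1:ℝ), ((0:ℝ),(0:ℝ))) + ((0:ℝ), v) := by
      simp [Prod.ext_iff]
    rw [this, map_add, map_smul, h1, h2]
  rwa [this] at hc

/-- the first return map `φ_Z = (ψ_X ∘ ψ_Y)²` of the transient
system fixes `0` and satisfies `φ_Z'(0) = α_Z²` where
`α_Z = X₁(0,0)Y₂(0,0) / (X₂(0,0)Y₁(0,0))`. -/
theorem first_return_map_deriv (X Y : ℝ × ℝ → ℝ × ℝ)
    (φX φY : ℝ × (ℝ × ℝ) → ℝ × ℝ)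
    (hX : Continuous X) (hY : Continuous Y)
    (hX2 : (X (0, 0)).2 ≠ 0) (hY1 : (Y (0, 0)).1 ≠ 0)
    (hφX : ContDiff ℝ 1 φX) (hφY : ContDiff ℝ 1 φY)
    (hinitX : ∀ p : ℝ × ℝ, φX (0, p) = p)
    (hinitY : ∀ p : ℝ × ℝ, φY (0, p) = p)
    (hodeX : ∀ (t : ℝ) (p : ℝ × ℝ), HasDerivAt (fun s => φX (s, p)) (X (φX (t, p))) t)
    (hodeY : ∀ (t : ℝ) (p : ℝ × ℝ), HasDerivAt (fun s => φY (s, p)) (Y (φY (t, p))) t)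
    (τX τY : ℝ → ℝ)
    (hτXd : DifferentiableAt ℝ τX 0) (hτYd : DifferentiableAt ℝ τY 0)
    (hτX0 : τX 0 = 0) (hτY0 : τY 0 = 0)
    (hhitY : ∀ᶠ x in nhds (0 : ℝ), (φY (τY x, (x, 0))).1 = 0)
    (hhitX : ∀ᶠ y in nhds (0 : ℝ), (φX (τX y, (0, y))).2 = 0)
    (ψY ψX φZ : ℝ → ℝ)
    (hψY : ψY = fun x => (φY (τY x, (x, 0))).2)
    (hψX : ψX = fun y => (φX (τX y, (0, y))).1)
    (hφZ : φZ = fun x => (ψX ∘ ψY) ((ψX ∘ ψY) x)) :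
    φZ 0 = 0 ∧
    HasDerivAt φZ
      ((((X (0, 0)).1 * (Y (0, 0)).2) / ((X (0, 0)).2 * (Y (0, 0)).1)) ^ 2) 0 := by
  set a := deriv τY 0
  set b := deriv τX 0
  set x1 := (X (0,0)).1 with hx1
  set x2 := (X (0,0)).2 with hx2
  set y1 := (Y (0,0)).1 with hy1
  set y2 := (Y (0,0)).2 with hy2
  have hfY : HasDerivAt (fun x => φY (τY x, (x, 0))) (a • Y (0,0) + (1, 0)) 0 := by
    have := transition_deriv φY Y hφY hinitY hodeY τY hτYd hτY0 (1, 0)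
    convert this using 2 with x
    simp
  have hfX : HasDerivAt (fun y => φX (τX y, (0, y))) (b • X (0,0) + (0, 1)) 0 := by
    have := transition_deriv φX X hφX hinitX hodeX τX hτXd hτX0 (0, 1)
    convert this using 2 with y
    simp
  have haY : a * y1 + 1 = 0 := by
    have h1 : HasDerivAt (fun x => (φY (τY x, (x, 0))).1) (a * y1 + 1) 0 := by
      have he : (a • Y (0,0) + ((1:ℝ),(0:ℝ))).1 = a * y1 + 1 := by simp [hy1]
      rw [← he]; exact hfY.fst
    have h0 : HasDerivAt (fun x => (φY (τY x, (x, 0))).1) 0 0 :=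
      (hasDerivAt_const (0:ℝ) (0:ℝ)).congr_of_eventuallyEq hhitY
    exact (h1.unique h0)
  have hbX : b * x2 + 1 = 0 := by
    have h1 : HasDerivAt (fun y => (φX (τX y, (0, y))).2) (b * x2 + 1) 0 := by
      have he : (b • X (0,0) + ((0:ℝ),(1:ℝ))).2 = b * x2 + 1 := by simp [hx2]
      rw [← he]; exact hfX.snd
    have h0 : HasDerivAt (fun y => (φX (τX y, (0, y))).2) 0 0 :=
      (hasDerivAt_const (0:ℝ) (0:ℝ)).congr_of_eventuallyEq hhitX
    exact (h1.unique h0)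
  have hψYd : HasDerivAt ψY (a * y2) 0 := by
    rw [hψY]
    have he : (a • Y (0,0) + ((1:ℝ),(0:ℝ))).2 = a * y2 := by simp [hy2]
    rw [← he]; exact hfY.snd
  have hψXd : HasDerivAt ψX (b * x1) 0 := by
    rw [hψX]
    have he : (b • X (0,0) + ((0:ℝ),(1:ℝ))).1 = b * x1 := by simp [hx1]
    rw [← he]; exact hfX.fst
  have hψY0 : ψY 0 = 0 := by rw [hψY]; simp only [hτY0, hinitY]
  have hψX0 : ψX 0 = 0 := by rw [hψX]; simp only [hτX0, hinitX]
  have hcomp : HasDerivAt (ψX ∘ ψY) (b * x1 * (a * y2)) 0 :=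
    HasDerivAt.comp (x := 0) (h := ψY) (h₂ := ψX) (by rw [hψY0]; exact hψXd) hψYd
  have h0 : (ψX ∘ ψY) 0 = 0 := by simp [Function.comp, hψY0, hψX0]
  have hZ : HasDerivAt φZ ((b * x1 * (a * y2)) * (b * x1 * (a * y2))) 0 := by
    rw [hφZ]
    exact HasDerivAt.comp (x := 0) (h := ψX ∘ ψY) (h₂ := ψX ∘ ψY)
      (by rw [h0]; exact hcomp) hcomp
  have hval : (b * x1 * (a * y2)) * (b * x1 * (a * y2)) = (x1 * y2 / (x2 * y1)) ^ 2 := by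
    have ha : a = -1 / y1 := by field_simp; linarith
    have hb : b = -1 / x2 := by field_simp; linarith
    rw [ha, hb]
    field_simp
  refine ⟨by simp [hφZ, Function.comp, hψY0, hψX0], ?_⟩
  rwa [hval] at hZ
end
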